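/- The sum of the three minima (f(r)+g(r)) + (g(s)+s) + (f(t)+g(t)) over r, s, t ∈ [1,∞) equals 10π/3 + 2·sqrt(3) + 2, which is greater than 15.936, where f(r) = sqrt(r²-1)+arcsin(1/r) and g(r) = 2π - 2·arcsin(r/2) for r ≤ 2, g(r) = π for r ≥ 2. -/

import Mathlib

/-! The two kinds of summands are minimised separately, both at `2`. On `(1, 2)` one has
`f' r = √(r² - 1) / r < 1` and `g' r = -1 / √(1 - (r/2)²) < -1`, so `f + g` and `g + id` decrease
on `[1, 2]`; on `[2, ∞)` the function `g` is the constant `π` while `f` increases. -/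

open Real Set

noncomputable def f (r : ℝ) : ℝ := Real.sqrt (r^2 - 1) + Real.arcsin (1/r)

noncomputable def g (r : ℝ) : ℝ :=
  if r ≤ 2 then 2*Real.pi - 2*Real.arcsin (r/2) else Real.pi

noncomputable def m (r s θ : ℝ) : ℝ :=
  if θ ≤ Real.arccos (1/r) + Real.arccos (1/s) then
    Real.sqrt (r^2 + s^2 - 2*r*s*Real.cos θ)
  else f r + f s + (θ - Real.pi)

abbrev E3 := EuclideanSpace ℝ (Fin 3)

/-- A set `K` has thickness at least 1 (thickness = twice infimal circumradius over
triples of distinct points) iff no three distinct points of `K` lie on a common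
sphere of radius less than `1/2`. -/
def ThickOne (K : Set E3) : Prop :=
  ∀ x ∈ K, ∀ y ∈ K, ∀ z ∈ K, x ≠ y → y ≠ z → x ≠ z →
    ∀ (c : E3) (ρ : ℝ), dist x c = ρ → dist y c = ρ → dist z c = ρ → 1/2 ≤ ρ

theorem sqrt_one_sub_inv_sq {r : ℝ} (hr : 0 < r) : √(1 - r⁻¹ ^ 2) = √(r ^ 2 - 1) / r := by
  rw [show 1 - r⁻¹ ^ 2 = (r ^ 2 - 1) / r ^ 2 by field_simp, sqrt_div' _ (by positivity),
    sqrt_sq hr.le]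

theorem hasDerivAt_f {r : ℝ} (hr : 1 < r) : HasDerivAt f (√(r ^ 2 - 1) / r) r := by
  have hr0 : 0 < r := one_pos.trans hr
  have hpos : 0 < r ^ 2 - 1 := by nlinarith
  have hsqrt : HasDerivAt (fun x : ℝ => √(x ^ 2 - 1)) (2 * r / (2 * √(r ^ 2 - 1))) r := by
    simpa using ((hasDerivAt_pow 2 r).sub_const 1).sqrt hpos.ne'
  have harcsin : HasDerivAt (fun x : ℝ => arcsin x⁻¹) (1 / √(1 - r⁻¹ ^ 2) * -(r ^ 2)⁻¹) r := by
    have h1 : r⁻¹ ≠ 1 := inv_ne_one.2 hr.ne'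
    have h2 : r⁻¹ ≠ -1 := by
      have : 0 < r⁻¹ := by positivity
      linarith
    exact (hasDerivAt_arcsin h2 h1).comp r (hasDerivAt_inv hr0.ne')
  have hf : f = fun x => √(x ^ 2 - 1) + arcsin x⁻¹ := by
    funext x; rw [f, one_div]
  rw [hf]
  refine (hsqrt.add harcsin).congr_deriv ?_
  rw [sqrt_one_sub_inv_sq hr0]
  field_simp
  rw [sq_sqrt hpos.le]
  ring

theorem hasDerivAt_g {r : ℝ} (hr₀ : -2 < r) (hr₂ : r < 2) :
    HasDerivAt g (-1 / √(1 - (r / 2) ^ 2)) r := by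
  have h1 : r / 2 ≠ 1 := by intro h; linarith
  have h2 : r / 2 ≠ -1 := by intro h; linarith
  have hexpr : HasDerivAt (fun x => 2 * π - 2 * arcsin (x / 2)) (-1 / √(1 - (r / 2) ^ 2)) r := by
    refine ((((hasDerivAt_arcsin h2 h1).comp r ((hasDerivAt_id r).div_const 2)).const_mul 2)
      |>.const_sub (2 * π)).congr_deriv ?_
    simp only [one_div]
    ring
  refine hexpr.congr_of_eventuallyEq ?_
  filter_upwards [Iio_mem_nhds hr₂] with x hx
  exact if_pos hx.le

theorem g_of_two_le {r : ℝ} (hr : 2 ≤ r) : g r = π := by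
  rcases hr.eq_or_lt with rfl | hlt
  · rw [g, if_pos le_rfl, div_self two_ne_zero, arcsin_one]
    ring
  · exact if_neg (not_le.2 hlt)

theorem continuousOn_f : ContinuousOn f (Ici 1) := by
  unfold f
  fun_prop (disch := intro x hx; exact (one_pos.trans_le hx).ne')

theorem continuousOn_g : ContinuousOn g (Iic 2) :=
  (show Continuous fun x => 2 * π - 2 * arcsin (x / 2) by fun_prop).continuousOn.congr
    fun _ hx => if_pos hx

theorem sqrt_sq_sub_one_div_lt_one {r : ℝ} (hr : 1 < r) : √(r ^ 2 - 1) / r < 1 := by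
  have hr0 : 0 < r := one_pos.trans hr
  rw [div_lt_one hr0, sqrt_lt' hr0]
  linarith

theorem one_lt_one_div_sqrt_one_sub_sq {x : ℝ} (hx₀ : x ≠ 0) (hx₁ : |x| < 1) :
    1 < 1 / √(1 - x ^ 2) := by
  have hx : 0 < x ^ 2 := by positivity
  have hx' : x ^ 2 < 1 := by rwa [sq_lt_one_iff_abs_lt_one]
  rw [lt_one_div one_pos (sqrt_pos.2 (by linarith)), div_one, sqrt_lt' one_pos]
  linarith

theorem f_strictMonoOn : StrictMonoOn f (Ici 1) := by
  refine strictMonoOn_of_deriv_pos (convex_Ici 1) continuousOn_f fun r hr => ?_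
  rw [interior_Ici] at hr
  rw [(hasDerivAt_f hr).deriv]
  exact div_pos (sqrt_pos.2 (by nlinarith [mem_Ioi.1 hr])) (one_pos.trans hr)

theorem deriv_g_lt_neg_one {r : ℝ} (hr : r ∈ Ioo 0 2) : deriv g r < -1 := by
  obtain ⟨hr₀, hr₂⟩ := hr
  rw [(hasDerivAt_g (by linarith) hr₂).deriv, neg_div, neg_lt_neg_iff]
  exact one_lt_one_div_sqrt_one_sub_sq (by positivity) (by rw [abs_lt]; constructor <;> linarith)

theorem f_add_g_strictAntiOn : StrictAntiOn (f + g) (Icc 1 2) := by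
  refine strictAntiOn_of_deriv_neg (convex_Icc 1 2)
    ((continuousOn_f.mono Icc_subset_Ici_self).add (continuousOn_g.mono Icc_subset_Iic_self))
    fun r hr => ?_
  rw [interior_Icc] at hr
  have hg := hasDerivAt_g (by linarith [hr.1]) hr.2
  rw [((hasDerivAt_f hr.1).add hg).deriv, ← hg.deriv]
  linarith [sqrt_sq_sub_one_div_lt_one hr.1, deriv_g_lt_neg_one ⟨by linarith [hr.1], hr.2⟩]

theorem g_add_id_strictAntiOn : StrictAntiOn (g + id) (Icc 1 2) := by
  refine strictAntiOn_of_deriv_neg (convex_Icc 1 2)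
    ((continuousOn_g.mono Icc_subset_Iic_self).add continuousOn_id) fun r hr => ?_
  rw [interior_Icc] at hr
  have hg := hasDerivAt_g (by linarith [hr.1]) hr.2
  rw [(hg.add (hasDerivAt_id r)).deriv, ← hg.deriv]
  linarith [deriv_g_lt_neg_one ⟨by linarith [hr.1], hr.2⟩]

theorem f_two : f 2 = √3 + π / 6 := by
  have h : arcsin (1 / 2) = π / 6 :=
    arcsin_eq_of_sin_eq (by rw [sin_pi_div_six, one_div])
      ⟨by linarith [pi_pos], by linarith [pi_pos]⟩
  norm_num [f, h]

theorem f_add_g_two_le {r : ℝ} (hr : 1 ≤ r) : f 2 + g 2 ≤ f r + g r := by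
  rcases le_total r 2 with h | h
  · exact f_add_g_strictAntiOn.antitoneOn ⟨hr, h⟩ ⟨one_le_two, le_rfl⟩ h
  · rw [g_of_two_le h, g_of_two_le le_rfl]
    linarith [f_strictMonoOn.monotoneOn (mem_Ici.2 one_le_two) (mem_Ici.2 hr) h]

theorem g_two_add_two_le {s : ℝ} (hs : 1 ≤ s) : g 2 + 2 ≤ g s + s := by
  rcases le_total s 2 with h | h
  · exact g_add_id_strictAntiOn.antitoneOn ⟨hs, h⟩ ⟨one_le_two, le_rfl⟩ h
  · rw [g_of_two_le h, g_of_two_le le_rfl]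
    linarith

theorem value_at_two_gt : (15.936 : ℝ) < 10 * π / 3 + 2 * √3 + 2 := by
  have hπ := pi_gt_d6
  have h3 : (1.7320508 : ℝ) < √3 := lt_sqrt_of_sq_lt (by norm_num)
  linarith

/-- The sum `(f(r)+g(r)) + (g(s)+s) + (f(t)+g(t))` over `r,s,t ∈ [1,∞)` is minimized
at `r = s = t = 2` with value `10π/3 + 2√3 + 2 > 15.936`. -/
theorem stmt18 :
    (∀ r ∈ Set.Ici (1:ℝ), ∀ s ∈ Set.Ici (1:ℝ), ∀ t ∈ Set.Ici (1:ℝ),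
        10*Real.pi/3 + 2*Real.sqrt 3 + 2 ≤ (f r + g r) + (g s + s) + (f t + g t)) ∧
      (f 2 + g 2) + (g 2 + 2) + (f 2 + g 2) = 10*Real.pi/3 + 2*Real.sqrt 3 + 2 ∧
      (15.936 : ℝ) < 10*Real.pi/3 + 2*Real.sqrt 3 + 2 := by
  have hvalue : (f 2 + g 2) + (g 2 + 2) + (f 2 + g 2) = 10 * π / 3 + 2 * √3 + 2 := by
    rw [f_two, g_of_two_le le_rfl]
    ring
  refine ⟨fun r hr s hs t ht => ?_, hvalue, value_at_two_gt⟩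
  linarith [f_add_g_two_le hr, g_two_add_two_le hs, f_add_g_two_le ht]
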